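/- For P ∈ 𝓘ⁿ_S(g), the expansion P(F+ψ+φ) = Σ_{k+ℓ=2n} Q^{k,ℓ} into bihomogeneous components Q^{k,ℓ} ∈ ℬ^{k,ℓ} satisfies the descent equations δQ^{k,ℓ} + dQ^{k-1,ℓ+1} = 0 for all k, ℓ with k+ℓ = 2n (with Q^{-1,2n+1} := 0); in particular each Q^{k,ℓ} is a δ-cocycle modulo d. -/

import Mathlib

open scoped TensorProduct

noncomputable section

/-- The graded bracket on `g ⊗ Ω` induced by `[X⊗P, Y⊗Q] = ⁅X,Y⁆ ⊗ (P*Q)`. -/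
def gaBracket (g : Type) [LieRing g] [LieAlgebra ℂ g] (Ω : Type) [Ring Ω] [Algebra ℂ Ω] :
    (g ⊗[ℂ] Ω) →ₗ[ℂ] (g ⊗[ℂ] Ω) →ₗ[ℂ] (g ⊗[ℂ] Ω) :=
  TensorProduct.map₂
    (LinearMap.mk₂ ℂ (fun X Y => ⁅X, Y⁆)
      (by intros; simp [add_lie]) (by intros; simp [smul_lie])
      (by intros; simp [lie_add]) (by intros; simp [lie_smul]))
    (LinearMap.mul ℂ Ω)

/-- The submodule of `g ⊗ Ω` of `g`-valued elements with components in a submodule `S` of `Ω`. -/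
def gvSub (g : Type) [LieRing g] [LieAlgebra ℂ g] {Ω : Type} [AddCommGroup Ω] [Module ℂ Ω]
    (S : Submodule ℂ Ω) : Submodule ℂ (g ⊗[ℂ] Ω) :=
  LinearMap.range (LinearMap.lTensor g S.subtype)

/-- A bigraded-commutative algebra structure on `Ω` given by bidegree pieces `gr k l`. -/
def IsBigradedCommAlg (Ω : Type) [Ring Ω] [Algebra ℂ Ω] (gr : ℕ → ℕ → Submodule ℂ Ω) : Prop :=
  (1 : Ω) ∈ gr 0 0 ∧
  (∀ k l m n, ∀ a ∈ gr k l, ∀ b ∈ gr m n, a * b ∈ gr (k + m) (l + n)) ∧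
  (∀ k l m n, ∀ a ∈ gr k l, ∀ b ∈ gr m n,
      a * b = ((-1 : ℂ)) ^ ((k + l) * (m + n)) • (b * a)) ∧
  DirectSum.IsInternal (fun p : ℕ × ℕ => gr p.1 p.2)

/-- An antiderivation with respect to the total degree of a bigrading. -/
def IsAntideriv {Ω : Type} [Ring Ω] [Algebra ℂ Ω] (gr : ℕ → ℕ → Submodule ℂ Ω)
    (R : Ω →ₗ[ℂ] Ω) : Prop :=
  ∀ k l, ∀ a ∈ gr k l, ∀ b, R (a * b) = R a * b + ((-1 : ℂ)) ^ (k + l) • (a * R b)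

/-- The bigraded Weil algebra data: a bigraded-commutative differential algebra with
differentials `d`, `δ` of bidegrees `(1,0)`, `(0,1)` and `g`-valued generators
`A, α, F, φ, ψ, ξ, B, β` satisfying the structure equations of Lemma 1.1. -/
structure BigradedWeil (g : Type) [LieRing g] [LieAlgebra ℂ g]
    (𝔄 : Type) [Ring 𝔄] [Algebra ℂ 𝔄] where
  gr : ℕ → ℕ → Submodule ℂ 𝔄
  graded : IsBigradedCommAlg 𝔄 gr
  d : 𝔄 →ₗ[ℂ] 𝔄
  δ : 𝔄 →ₗ[ℂ] 𝔄
  d_antideriv : IsAntideriv gr d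
  δ_antideriv : IsAntideriv gr δ
  d_gr : ∀ k l, ∀ x ∈ gr k l, d x ∈ gr (k + 1) l
  δ_gr : ∀ k l, ∀ x ∈ gr k l, δ x ∈ gr k (l + 1)
  d_sq : ∀ x, d (d x) = 0
  δ_sq : ∀ x, δ (δ x) = 0
  d_δ : ∀ x, d (δ x) + δ (d x) = 0
  A : g ⊗[ℂ] 𝔄
  α : g ⊗[ℂ] 𝔄
  F : g ⊗[ℂ] 𝔄
  φ : g ⊗[ℂ] 𝔄
  ψ : g ⊗[ℂ] 𝔄
  ξ : g ⊗[ℂ] 𝔄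
  B : g ⊗[ℂ] 𝔄
  β : g ⊗[ℂ] 𝔄
  A_mem : A ∈ gvSub g (gr 1 0)
  α_mem : α ∈ gvSub g (gr 0 1)
  F_mem : F ∈ gvSub g (gr 2 0)
  φ_mem : φ ∈ gvSub g (gr 0 2)
  ψ_mem : ψ ∈ gvSub g (gr 1 1)
  ξ_mem : ξ ∈ gvSub g (gr 1 1)
  B_mem : B ∈ gvSub g (gr 2 1)
  β_mem : β ∈ gvSub g (gr 1 2)
  eqF : F = LinearMap.lTensor g d A + (2⁻¹ : ℂ) • gaBracket g 𝔄 A A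
  eqφ : φ = LinearMap.lTensor g δ α + (2⁻¹ : ℂ) • gaBracket g 𝔄 α α
  eqψ : ψ = LinearMap.lTensor g δ A + LinearMap.lTensor g d α + gaBracket g 𝔄 A α
  eqξ : ξ = LinearMap.lTensor g δ A
  eqB : B = LinearMap.lTensor g δ F + gaBracket g 𝔄 α F
  eqβ : β = LinearMap.lTensor g d φ + gaBracket g 𝔄 A φ

/-- The universal property expressing that the bigraded-commutative algebra `𝔄` is free on
the given list of `g`-valued generators with the given bidegrees. -/
def FreeOn (g : Type) [LieRing g] [LieAlgebra ℂ g] {𝔄 : Type} [Ring 𝔄] [Algebra ℂ 𝔄]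
    (gr : ℕ → ℕ → Submodule ℂ 𝔄) {m : ℕ} (gens : Fin m → (ℕ × ℕ) × (g ⊗[ℂ] 𝔄)) : Prop :=
  ∀ (Ω : Type) [Ring Ω] [Algebra ℂ Ω] (grΩ : ℕ → ℕ → Submodule ℂ Ω),
    IsBigradedCommAlg Ω grΩ →
    ∀ v : Fin m → g ⊗[ℂ] Ω,
      (∀ j, v j ∈ gvSub g (grΩ (gens j).1.1 (gens j).1.2)) →
      ∃! h : 𝔄 →ₐ[ℂ] Ω,
        (∀ k l, ∀ x ∈ gr k l, h x ∈ grΩ k l) ∧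
        ∀ j, LinearMap.lTensor g h.toLinearMap (gens j).2 = v j

/-- The list of generators of the bigraded Weil algebra with their bidegrees. -/
def BigradedWeil.gens {g : Type} [LieRing g] [LieAlgebra ℂ g] {𝔄 : Type} [Ring 𝔄]
    [Algebra ℂ 𝔄] (W : BigradedWeil g 𝔄) : Fin 8 → (ℕ × ℕ) × (g ⊗[ℂ] 𝔄) :=
  ![((1, 0), W.A), ((0, 1), W.α), ((2, 0), W.F), ((0, 2), W.φ),
    ((1, 1), W.ψ), ((1, 1), W.ξ), ((2, 1), W.B), ((1, 2), W.β)]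

/-- The `i`-th component in `𝔄` of a `g`-valued element of `g ⊗ 𝔄`, w.r.t. a basis of `g`. -/
def coordEv {g : Type} [LieRing g] [LieAlgebra ℂ g] {ι : Type} (b : Module.Basis ι ℂ g)
    {𝔄 : Type} [Ring 𝔄] [Algebra ℂ 𝔄] (i : ι) : g ⊗[ℂ] 𝔄 →ₗ[ℂ] 𝔄 :=
  (TensorProduct.lid ℂ 𝔄).toLinearMap ∘ₗ LinearMap.rTensor 𝔄 (b.coord i)

/-- Evaluation of a multilinear form `I` on `g` on `g`-valued elements `Z j ∈ g ⊗ 𝔄`,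
multiplying the `𝔄`-components in order. -/
def multiEval {g : Type} [LieRing g] [LieAlgebra ℂ g] {ι : Type} [Fintype ι]
    (b : Module.Basis ι ℂ g) {𝔄 : Type} [Ring 𝔄] [Algebra ℂ 𝔄] {n : ℕ}
    (I : MultilinearMap ℂ (fun _ : Fin n => g) ℂ) (Z : Fin n → g ⊗[ℂ] 𝔄) : 𝔄 :=
  ∑ iv : Fin n → ι, I (fun j => b (iv j)) • (List.ofFn fun j => coordEv b (iv j) (Z j)).prod

/-- `ad`-invariance of a multilinear form on `g`. -/
def IsInvForm {g : Type} [LieRing g] [LieAlgebra ℂ g] {n : ℕ}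
    (I : MultilinearMap ℂ (fun _ : Fin n => g) ℂ) : Prop :=
  ∀ (X : g) (v : Fin n → g), ∑ j, I (Function.update v j ⁅v j, X⁆) = 0

/-- Symmetry of a multilinear form on `g`. -/
def IsSymForm {g : Type} [LieRing g] [LieAlgebra ℂ g] {n : ℕ}
    (I : MultilinearMap ℂ (fun _ : Fin n => g) ℂ) : Prop :=
  ∀ (σ : Equiv.Perm (Fin n)) (v : Fin n → g), I (fun j => v (σ j)) = I v

/-- The five `g`-valued elements `F, ψ, φ, B, β` of the bigraded Weil algebra. -/
def BigradedWeil.genOf {g : Type} [LieRing g] [LieAlgebra ℂ g] {𝔄 : Type} [Ring 𝔄]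
    [Algebra ℂ 𝔄] (W : BigradedWeil g 𝔄) : Fin 5 → g ⊗[ℂ] 𝔄 :=
  ![W.F, W.ψ, W.φ, W.B, W.β]

/-- The base `ℬ(g) ⊆ 𝔄(g)`: the span of the invariant "polynomials" `𝓘(F,ψ,φ,B,β)`. -/
def baseB {g : Type} [LieRing g] [LieAlgebra ℂ g] {ι : Type} [Fintype ι] (b : Module.Basis ι ℂ g)
    {𝔄 : Type} [Ring 𝔄] [Algebra ℂ 𝔄] (W : BigradedWeil g 𝔄) : Submodule ℂ 𝔄 :=
  Submodule.span ℂ { x | ∃ (n : ℕ) (I : MultilinearMap ℂ (fun _ : Fin n => g) ℂ)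
      (c : Fin n → Fin 5), IsInvForm I ∧ x = multiEval b I (fun j => W.genOf (c j)) }

end

/-! The total differential `D = d + δ` is an antiderivation with `D² = 0`. In the coordinates of a
basis of `g`, the total connection `a = A + α` and the total curvature `f = F + ψ + φ` satisfy the
structure equation `f = D a + ½ [a, a]`; applying `D` and the Jacobi identity gives the Bianchi
identity `D f = [f, a]`. As the coordinates of `f` are even, the Leibniz rule turns
`D P(f, …, f)` into `Σ_j P(f, …, [f, a], …, f)`, which vanishes by `ad`-invariance of `P`.
Sorting `D (Σ_j Q^{2n-j,j}) = 0` by bidegree gives the descent equations. -/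

open Finset

section Descent

variable {M : Type} [AddCommGroup M] [Module ℂ M] (d δ : M →ₗ[ℂ] M)

/-- `bidegreeComponent d δ Q m` collects the terms of `(d + δ) (∑ Q j)` with `δ`-degree `m`,
when `Q j` has `δ`-degree `j`. -/
def bidegreeComponent (Q : ℕ → M) : ℕ → M
  | 0 => d (Q 0)
  | j + 1 => δ (Q j) + d (Q (j + 1))

lemma sum_range_bidegreeComponent (Q : ℕ → M) (N : ℕ) :
    ∑ m ∈ range (N + 1), bidegreeComponent d δ Q m
      = ∑ j ∈ range N, (d + δ) (Q j) + d (Q N) := by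
  induction N with
  | zero => simp [bidegreeComponent]
  | succ N ih =>
    rw [sum_range_succ, ih, sum_range_succ, bidegreeComponent, LinearMap.add_apply]
    abel

variable {gr : ℕ → ℕ → Submodule ℂ M}

lemma bidegreeComponent_mem (hd : ∀ k l, ∀ x ∈ gr k l, d x ∈ gr (k + 1) l)
    (hδ : ∀ k l, ∀ x ∈ gr k l, δ x ∈ gr k (l + 1)) {N : ℕ} {Q : ℕ → M}
    (hQ : ∀ j, Q j ∈ gr (N - j) j) (hQ_zero : ∀ j, N < j → Q j = 0) :
    ∀ m ≤ N + 1, bidegreeComponent d δ Q m ∈ gr (N + 1 - m) m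
  | 0, _ => hd _ _ _ (hQ 0)
  | j + 1, hj => by
    refine add_mem (by simpa [Nat.add_sub_add_right] using hδ _ _ _ (hQ j)) ?_
    rcases Nat.lt_or_ge N (j + 1) with hN | hN
    · simp [hQ_zero _ hN]
    · simpa [show N - (j + 1) + 1 = N + 1 - (j + 1) by omega] using hd _ _ _ (hQ (j + 1))

theorem descent_equations (hgr : iSupIndep fun p : ℕ × ℕ => gr p.1 p.2)
    (hd : ∀ k l, ∀ x ∈ gr k l, d x ∈ gr (k + 1) l)
    (hδ : ∀ k l, ∀ x ∈ gr k l, δ x ∈ gr k (l + 1)) {N : ℕ} {Q : ℕ → M}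
    (hQ : ∀ j, Q j ∈ gr (N - j) j) (hQ_zero : ∀ j, N < j → Q j = 0)
    (hclosed : (d + δ) (∑ j ∈ range (N + 1), Q j) = 0) :
    ∀ j ≤ N, δ (Q j) + d (Q (j + 1)) = 0 := by
  have hindep : iSupIndep fun m => gr (N + 1 - m) m :=
    hgr.comp (f := fun m => (N + 1 - m, m)) fun m m' h => congrArg Prod.snd h
  have hsum : ∑ m ∈ range (N + 2), bidegreeComponent d δ Q m = 0 := by
    rw [sum_range_bidegreeComponent, hQ_zero _ N.lt_succ_self, map_zero, add_zero,
      ← map_sum, hclosed]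
  intro j hj
  exact (iSupIndep_iff_finsetSum_eq_zero_imp_eq_zero _).mp hindep _ _
    (fun m hm => bidegreeComponent_mem d δ hd hδ hQ hQ_zero m
      (Nat.lt_succ_iff.mp (mem_range.mp hm))) hsum
    (j + 1) (mem_range.mpr (by omega))

end Descent

section Coordinates

variable {g : Type} [LieRing g] [LieAlgebra ℂ g] {ι : Type} (b : Module.Basis ι ℂ g)
  {𝔄 : Type} [Ring 𝔄] [Algebra ℂ 𝔄]

noncomputable def structConst (i p q : ι) : ℂ := b.coord i ⁅b p, b q⁆

lemma structConst_swap (i p q : ι) : structConst b i q p = -structConst b i p q := by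
  rw [structConst, structConst, ← lie_skew, map_neg]

lemma sum_structConst_smul_mul_swap [Fintype ι] (i : ι) (x y : ι → 𝔄) :
    ∑ p, ∑ q, structConst b i p q • (x p * y q) = -∑ p, ∑ q, structConst b i p q • (x q * y p) := by
  rw [sum_comm, ← sum_neg_distrib]
  refine sum_congr rfl fun p _ => ?_
  rw [← sum_neg_distrib]
  refine sum_congr rfl fun q _ => ?_
  rw [structConst_swap, neg_smul]

lemma coord_lie [Fintype ι] (i : ι) (X Y : g) :
    b.coord i ⁅X, Y⁆ = ∑ p, ∑ q, b.repr X p * b.repr Y q * structConst b i p q := by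
  conv_lhs => rw [← b.sum_repr X, ← b.sum_repr Y]
  simp only [sum_lie, lie_sum, smul_lie, lie_smul, map_sum, map_smul, structConst, smul_eq_mul,
    mul_sum]
  rw [sum_comm]
  exact sum_congr rfl fun p _ => sum_congr rfl fun q _ => by ring

lemma sum_structConst_mul_structConst [Fintype ι] (i q r s : ι) :
    ∑ p, structConst b i p q * structConst b p r s = b.coord i ⁅⁅b r, b s⁆, b q⁆ := by
  conv_rhs => rw [← b.sum_repr ⁅b r, b s⁆]
  simp only [sum_lie, smul_lie, map_sum, map_smul, structConst, smul_eq_mul,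
    Module.Basis.coord_apply, mul_comm]

@[simp] lemma coordEv_tmul (i : ι) (X : g) (a : 𝔄) :
    coordEv b i (X ⊗ₜ[ℂ] a) = b.coord i X • a := by
  simp [coordEv]

lemma coordEv_lTensor (i : ι) (L : 𝔄 →ₗ[ℂ] 𝔄) (Z : g ⊗[ℂ] 𝔄) :
    coordEv b i (LinearMap.lTensor g L Z) = L (coordEv b i Z) := by
  induction Z using TensorProduct.induction_on with
  | zero => simp
  | tmul X a => simp
  | add x y hx hy => simp [hx, hy]

lemma coordEv_mem {S : Submodule ℂ 𝔄} (i : ι) {Z : g ⊗[ℂ] 𝔄} (hZ : Z ∈ gvSub g S) :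
    coordEv b i Z ∈ S := by
  obtain ⟨w, rfl⟩ := hZ
  induction w using TensorProduct.induction_on with
  | zero => simp
  | tmul X s => simpa using S.smul_mem _ s.2
  | add x y hx hy => rw [map_add, map_add]; exact S.add_mem hx hy

@[simp] lemma gaBracket_tmul (X Y : g) (a c : 𝔄) :
    gaBracket g 𝔄 (X ⊗ₜ[ℂ] a) (Y ⊗ₜ[ℂ] c) = ⁅X, Y⁆ ⊗ₜ[ℂ] (a * c) := by
  simp [gaBracket]

lemma coordEv_gaBracket [Fintype ι] (i : ι) (Z Z' : g ⊗[ℂ] 𝔄) :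
    coordEv b i (gaBracket g 𝔄 Z Z')
      = ∑ p, ∑ q, structConst b i p q • (coordEv b p Z * coordEv b q Z') := by
  induction Z using TensorProduct.induction_on with
  | zero => simp
  | add x y hx hy => simp only [map_add, LinearMap.add_apply, hx, hy, add_mul, smul_add,
      sum_add_distrib]
  | tmul X a =>
    induction Z' using TensorProduct.induction_on with
    | zero => simp
    | add x y hx hy => simp only [map_add, hx, hy, mul_add, smul_add, sum_add_distrib]
    | tmul Y c =>
      rw [gaBracket_tmul, coordEv_tmul, coord_lie, sum_smul]
      refine sum_congr rfl fun p _ => ?_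
      rw [sum_smul]
      refine sum_congr rfl fun q _ => ?_
      simp only [coordEv_tmul, smul_mul_smul_comm, Module.Basis.coord_apply, smul_smul]
      ring_nf

end Coordinates

section Jacobi

variable {g : Type} [LieRing g] [LieAlgebra ℂ g] {ι : Type} [Fintype ι] (b : Module.Basis ι ℂ g)
  {𝔄 : Type} [Ring 𝔄] [Algebra ℂ 𝔄]

/-- The Jacobi identity kills every cyclically symmetric cubic expression. -/
lemma sum_coord_lie_lie_smul_mul_mul (i : ι) {x : ι → 𝔄}
    (hx : ∀ r s q, x r * x s * x q = x s * x q * x r) :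
    ∑ q, ∑ r, ∑ s, b.coord i ⁅⁅b r, b s⁆, b q⁆ • (x r * x s * x q) = 0 := by
  let e : ι × ι × ι ≃ ι × ι × ι := (Equiv.prodComm ι (ι × ι)).trans (Equiv.prodAssoc ι ι ι)
  let c : ι × ι × ι → ℂ := fun t => b.coord i ⁅⁅b t.2.1, b t.2.2⁆, b t.1⁆
  let m : ι × ι × ι → 𝔄 := fun t => x t.2.1 * x t.2.2 * x t.1
  have hm : ∀ t, m (e t) = m t := fun t => (hx t.2.1 t.2.2 t.1).symm
  have hc : ∀ t, c t + c (e t) + c (e (e t)) = 0 := fun ⟨q, r, s⟩ => by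
    have h := lie_jacobi (b q) (b r) (b s)
    rw [← lie_skew (b q) ⁅b r, b s⁆, ← lie_skew (b r) ⁅b s, b q⁆, ← lie_skew (b s) ⁅b q, b r⁆,
      ← neg_add, ← neg_add, neg_eq_zero] at h
    simp only [c, e, Equiv.trans_apply, Equiv.prodComm_apply, Equiv.prodAssoc_apply, Prod.fst_swap,
      Prod.snd_swap, ← map_add, h, map_zero]
  have h3 : (3 : ℂ) • ∑ t, c t • m t = 0 := by
    calc (3 : ℂ) • ∑ t, c t • m t
        = ∑ t, c t • m t + ∑ t, c (e t) • m (e t) + ∑ t, c (e (e t)) • m (e (e t)) := by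
          rw [Equiv.sum_comp e (fun t => c t • m t),
            Equiv.sum_comp e (fun t => c (e t) • m (e t)), Equiv.sum_comp e (fun t => c t • m t)]
          module
      _ = ∑ t, (c t + c (e t) + c (e (e t))) • m t := by
          simp only [hm, add_smul, sum_add_distrib]
      _ = 0 := by simp only [hc, zero_smul, sum_const_zero]
  rw [smul_eq_zero, or_iff_right (by norm_num)] at h3
  simpa only [← Fintype.sum_prod_type'] using h3

end Jacobi

section OrderedProduct

variable {R : Type*} [Semiring R]

lemma ofFn_update_eq_set {α : Type*} {m : ℕ} (x : Fin m → α) (j : Fin m) (y : α) :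
    List.ofFn (Function.update x j y) = (List.ofFn x).set j y :=
  List.ext_getElem (by simp) fun i _ _ => by
    simp [Function.update_apply, List.getElem_set, Fin.ext_iff, eq_comm]

lemma prod_ofFn_update {m : ℕ} (x : Fin m → R) (j : Fin m) (y : R) :
    (List.ofFn (Function.update x j y)).prod
      = ((List.ofFn x).take j).prod * y * ((List.ofFn x).drop (j + 1)).prod := by
  simp [ofFn_update_eq_set, List.prod_set]

lemma prod_ofFn_update_sum {m : ℕ} (x : Fin m → R) (j : Fin m) {κ : Type*} (s : Finset κ)
    (y : κ → R) :
    (List.ofFn (Function.update x j (∑ k ∈ s, y k))).prod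
      = ∑ k ∈ s, (List.ofFn (Function.update x j (y k))).prod := by
  simp only [prod_ofFn_update, sum_mul, mul_sum]

lemma prod_ofFn_update_smul {S : Type*} [Monoid S] [DistribMulAction S R] [IsScalarTower S R R]
    [SMulCommClass S R R] {m : ℕ} (x : Fin m → R) (j : Fin m) (c : S) (y : R) :
    (List.ofFn (Function.update x j (c • y))).prod
      = c • (List.ofFn (Function.update x j y)).prod := by
  simp only [prod_ofFn_update, smul_mul_assoc, mul_smul_comm]

lemma prod_ofFn_update_mul_of_commute {m : ℕ} {x : Fin m → R} {y : R} (hy : ∀ k, Commute y (x k))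
    (j : Fin m) (u : R) :
    (List.ofFn (Function.update x j (u * y))).prod
      = (List.ofFn (Function.update x j u)).prod * y := by
  have hyR : Commute y ((List.ofFn x).drop (j + 1)).prod :=
    Commute.list_prod_right _ _ fun z hz => by
      obtain ⟨k, rfl⟩ := List.mem_ofFn.mp (List.mem_of_mem_drop hz)
      exact hy k
  simp only [prod_ofFn_update, mul_assoc, hyR.eq]

lemma map_prod_ofFn_of_leibniz {F : Type*} [FunLike F R R] [AddMonoidHomClass F R R] (D : F)
    (hD₁ : D 1 = 0) {m : ℕ} (x : Fin m → R) (hx : ∀ j y, D (x j * y) = D (x j) * y + x j * D y) :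
    D (List.ofFn x).prod = ∑ j, (List.ofFn (Function.update x j (D (x j)))).prod := by
  induction m with
  | zero => simp [hD₁]
  | succ m ih =>
    obtain ⟨a, t, rfl⟩ : ∃ a t, Fin.cons a t = x := ⟨_, _, Fin.cons_self_tail x⟩
    have ha : ∀ y, D (a * y) = D a * y + a * D y := by simpa using hx 0
    have ht : ∀ j y, D (t j * y) = D (t j) * y + t j * D y := fun j => by simpa using hx j.succ
    simp only [List.ofFn_cons, List.prod_cons, ha, ih t ht, Fin.sum_univ_succ, Fin.cons_zero,
      Fin.cons_succ, Fin.update_cons_zero, ← Fin.cons_update, mul_sum]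

end OrderedProduct

section Reindexing

variable {α β : Type*} [DecidableEq α]

lemma involutive_update_swap (j : α) :
    Function.Involutive fun x : (α → β) × β => (Function.update x.1 j x.2, x.1 j) := by
  rintro ⟨x, y⟩
  simp

lemma sum_sum_update_swap [Fintype α] [Fintype β] {M : Type*} [AddCommMonoid M] (j : α)
    (H : (α → β) → β → M) :
    ∑ x, ∑ y, H x y = ∑ w, ∑ k, H (Function.update w j k) (w j) := by
  simp only [← Fintype.sum_prod_type']
  exact (Equiv.sum_comp (Function.Involutive.toPerm _ (involutive_update_swap (β := β) j))
    fun x => H x.1 x.2).symm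

end Reindexing

lemma MultilinearMap.sum_map_update_basis_mul_coord {g : Type*} [AddCommGroup g] [Module ℂ g]
    {ι : Type*} [Fintype ι] (b : Module.Basis ι ℂ g) {n : ℕ}
    (P : MultilinearMap ℂ (fun _ : Fin n => g) ℂ) (v : Fin n → g) (j : Fin n) (Y : g) :
    ∑ k, P (Function.update v j (b k)) * b.coord k Y = P (Function.update v j Y) := by
  conv_rhs => rw [← b.sum_repr Y, P.map_update_sum]
  simp [P.map_update_smul, mul_comm]

namespace BigradedWeil

variable {g : Type} [LieRing g] [LieAlgebra ℂ g] {ι : Type} (b : Module.Basis ι ℂ g)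
  {𝔄 : Type} [Ring 𝔄] [Algebra ℂ 𝔄] (W : BigradedWeil g 𝔄)

def totalDiff : 𝔄 →ₗ[ℂ] 𝔄 := W.d + W.δ

def degOne : Submodule ℂ 𝔄 := W.gr 1 0 ⊔ W.gr 0 1

def degTwo : Submodule ℂ 𝔄 := W.gr 2 0 ⊔ W.gr 1 1 ⊔ W.gr 0 2

lemma totalDiff_totalDiff (x : 𝔄) : W.totalDiff (W.totalDiff x) = 0 := by
  simp only [totalDiff, LinearMap.add_apply, map_add, W.d_sq, W.δ_sq, zero_add, add_zero]
  rw [add_comm]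
  exact W.d_δ x

lemma totalDiff_mul_of_mem_gr {k l : ℕ} {x : 𝔄} (hx : x ∈ W.gr k l) (y : 𝔄) :
    W.totalDiff (x * y) = W.totalDiff x * y + (-1 : ℂ) ^ (k + l) • (x * W.totalDiff y) := by
  simp only [totalDiff, LinearMap.add_apply, W.d_antideriv k l x hx y,
    W.δ_antideriv k l x hx y, mul_add, smul_add, add_mul]
  abel

lemma totalDiff_one : W.totalDiff 1 = 0 := by
  simpa using W.totalDiff_mul_of_mem_gr W.graded.1 1

lemma totalDiff_mul_of_mem_degOne {x : 𝔄} (hx : x ∈ W.degOne) (y : 𝔄) :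
    W.totalDiff (x * y) = W.totalDiff x * y - x * W.totalDiff y := by
  obtain ⟨u, hu, v, hv, rfl⟩ := Submodule.mem_sup.mp hx
  simp only [add_mul, map_add, W.totalDiff_mul_of_mem_gr hu, W.totalDiff_mul_of_mem_gr hv]
  simp only [zero_add, add_zero, pow_one, neg_one_smul]
  abel

lemma totalDiff_mul_of_mem_degTwo {x : 𝔄} (hx : x ∈ W.degTwo) (y : 𝔄) :
    W.totalDiff (x * y) = W.totalDiff x * y + x * W.totalDiff y := by
  obtain ⟨uv, huv, w, hw, rfl⟩ := Submodule.mem_sup.mp hx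
  obtain ⟨u, hu, v, hv, rfl⟩ := Submodule.mem_sup.mp huv
  simp only [add_mul, map_add, W.totalDiff_mul_of_mem_gr hu, W.totalDiff_mul_of_mem_gr hv,
    W.totalDiff_mul_of_mem_gr hw]
  norm_num
  abel

lemma totalDiff_mem_degTwo {x : 𝔄} (hx : x ∈ W.degOne) : W.totalDiff x ∈ W.degTwo := by
  obtain ⟨u, hu, v, hv, rfl⟩ := Submodule.mem_sup.mp hx
  have hsplit : W.totalDiff (u + v) = W.d u + (W.δ u + W.d v) + W.δ v := by
    simp only [totalDiff, LinearMap.add_apply, map_add]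
    abel
  rw [hsplit]
  exact add_mem (add_mem (Submodule.mem_sup_left (Submodule.mem_sup_left (W.d_gr 1 0 u hu)))
    (Submodule.mem_sup_left (Submodule.mem_sup_right
      (add_mem (W.δ_gr 1 0 u hu) (W.d_gr 0 1 v hv)))))
    (Submodule.mem_sup_right (W.δ_gr 0 1 v hv))

lemma mul_eq_neg_mul_of_mem_degOne {x y : 𝔄} (hx : x ∈ W.degOne) (hy : y ∈ W.degOne) :
    x * y = -(y * x) := by
  obtain ⟨u, hu, v, hv, rfl⟩ := Submodule.mem_sup.mp hx
  obtain ⟨u', hu', v', hv', rfl⟩ := Submodule.mem_sup.mp hy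
  have hc := W.graded.2.2.1
  simp only [mul_add, add_mul, hc _ _ _ _ _ hu _ hu', hc _ _ _ _ _ hu _ hv',
    hc _ _ _ _ _ hv _ hu', hc _ _ _ _ _ hv _ hv']
  norm_num
  abel

lemma commute_of_mem_degTwo_of_mem_degOne {x y : 𝔄} (hx : x ∈ W.degTwo) (hy : y ∈ W.degOne) :
    Commute x y := by
  obtain ⟨uv, huv, w, hw, rfl⟩ := Submodule.mem_sup.mp hx
  obtain ⟨u, hu, v, hv, rfl⟩ := Submodule.mem_sup.mp huv
  obtain ⟨u', hu', v', hv', rfl⟩ := Submodule.mem_sup.mp hy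
  have hc := W.graded.2.2.1
  simp only [Commute, SemiconjBy, mul_add, add_mul, hc _ _ _ _ _ hu _ hu', hc _ _ _ _ _ hu _ hv',
    hc _ _ _ _ _ hv _ hu', hc _ _ _ _ _ hv _ hv', hc _ _ _ _ _ hw _ hu', hc _ _ _ _ _ hw _ hv']
  norm_num
  abel

lemma mul_mul_rotate_of_mem_degOne {x y z : 𝔄} (hx : x ∈ W.degOne) (hy : y ∈ W.degOne)
    (hz : z ∈ W.degOne) : x * y * z = y * z * x := by
  rw [W.mul_eq_neg_mul_of_mem_degOne hx hy, neg_mul, mul_assoc,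
    W.mul_eq_neg_mul_of_mem_degOne hx hz, mul_neg, neg_neg, mul_assoc]

noncomputable def connCoord (i : ι) : 𝔄 := coordEv b i (W.A + W.α)

noncomputable def curvCoord (i : ι) : 𝔄 := coordEv b i (W.F + W.ψ + W.φ)

lemma connCoord_mem (i : ι) : W.connCoord b i ∈ W.degOne := by
  rw [connCoord, map_add]
  exact add_mem (Submodule.mem_sup_left (coordEv_mem b i W.A_mem))
    (Submodule.mem_sup_right (coordEv_mem b i W.α_mem))

lemma curvCoord_mem (i : ι) : W.curvCoord b i ∈ W.degTwo := by
  rw [curvCoord, map_add, map_add]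
  exact add_mem (add_mem (Submodule.mem_sup_left (Submodule.mem_sup_left (coordEv_mem b i W.F_mem)))
    (Submodule.mem_sup_left (Submodule.mem_sup_right (coordEv_mem b i W.ψ_mem))))
    (Submodule.mem_sup_right (coordEv_mem b i W.φ_mem))

variable [Fintype ι]

/-- The structure equation `F + ψ + φ = (d + δ)(A + α) + ½ [A + α, A + α]` in coordinates. -/
lemma curvCoord_eq (i : ι) :
    W.curvCoord b i = W.totalDiff (W.connCoord b i)
      + (2⁻¹ : ℂ) • ∑ p, ∑ q, structConst b i p q • (W.connCoord b p * W.connCoord b q) := by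
  set A : ι → 𝔄 := fun p => coordEv b p W.A
  set α : ι → 𝔄 := fun p => coordEv b p W.α
  have hF : coordEv b i W.F
      = W.d (A i) + (2⁻¹ : ℂ) • ∑ p, ∑ q, structConst b i p q • (A p * A q) := by
    rw [W.eqF, map_add, map_smul, coordEv_lTensor, coordEv_gaBracket]
  have hφ : coordEv b i W.φ
      = W.δ (α i) + (2⁻¹ : ℂ) • ∑ p, ∑ q, structConst b i p q • (α p * α q) := by
    rw [W.eqφ, map_add, map_smul, coordEv_lTensor, coordEv_gaBracket]
  have hψ : coordEv b i W.ψ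
      = W.δ (A i) + W.d (α i) + ∑ p, ∑ q, structConst b i p q • (A p * α q) := by
    rw [W.eqψ, map_add, map_add, coordEv_lTensor, coordEv_lTensor, coordEv_gaBracket]
  have hαA : ∑ p, ∑ q, structConst b i p q • (α p * A q)
      = ∑ p, ∑ q, structConst b i p q • (A p * α q) := by
    rw [sum_structConst_smul_mul_swap, ← sum_neg_distrib]
    refine sum_congr rfl fun p _ => ?_
    rw [← sum_neg_distrib]
    refine sum_congr rfl fun q _ => ?_
    have h := W.graded.2.2.1 _ _ _ _ _ (coordEv_mem b q W.α_mem) _ (coordEv_mem b p W.A_mem)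
    norm_num at h
    rw [← smul_neg, h, neg_neg]
  have hconn : ∀ p, W.connCoord b p = A p + α p := fun p => map_add _ _ _
  simp only [curvCoord, map_add, hF, hφ, hψ, hconn, totalDiff, LinearMap.add_apply, add_mul,
    mul_add, smul_add, sum_add_distrib, hαA]
  module

lemma sum_structConst_smul_mul_connCoord_eq_zero (i : ι) :
    ∑ p, ∑ q, structConst b i p q • ((∑ r, ∑ s, structConst b p r s •
      (W.connCoord b r * W.connCoord b s)) * W.connCoord b q) = 0 := by
  simp only [sum_mul, smul_mul_assoc, smul_sum, smul_smul]
  rw [sum_comm]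
  conv_lhs => enter [2, q]; rw [sum_comm]; enter [2, r]; rw [sum_comm]
  simp only [← sum_smul, sum_structConst_mul_structConst]
  exact sum_coord_lie_lie_smul_mul_mul b i fun r s q =>
    W.mul_mul_rotate_of_mem_degOne (connCoord_mem b W r) (connCoord_mem b W s) (connCoord_mem b W q)

/-- The Bianchi identity `(d + δ)(F + ψ + φ) = [F + ψ + φ, A + α]` in coordinates. -/
lemma totalDiff_curvCoord (i : ι) :
    W.totalDiff (W.curvCoord b i)
      = ∑ p, ∑ q, structConst b i p q • (W.curvCoord b p * W.connCoord b q) := by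
  have hswap : ∑ p, ∑ q, structConst b i p q • (W.connCoord b p * W.totalDiff (W.connCoord b q))
      = -∑ p, ∑ q, structConst b i p q • (W.totalDiff (W.connCoord b p) * W.connCoord b q) := by
    rw [sum_structConst_smul_mul_swap]
    simp only [(W.commute_of_mem_degTwo_of_mem_degOne (W.totalDiff_mem_degTwo (connCoord_mem b W _))
      (connCoord_mem b W _)).eq]
  have hDa : ∀ p, W.totalDiff (W.connCoord b p) = W.curvCoord b p - (2⁻¹ : ℂ) •
      ∑ r, ∑ s, structConst b p r s • (W.connCoord b r * W.connCoord b s) := fun p => by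
    rw [curvCoord_eq, add_sub_cancel_right]
  calc W.totalDiff (W.curvCoord b i)
      = ∑ p, ∑ q, structConst b i p q • (W.totalDiff (W.connCoord b p) * W.connCoord b q) := by
        rw [curvCoord_eq, map_add, totalDiff_totalDiff, zero_add, map_smul, map_sum]
        simp only [map_sum, map_smul, W.totalDiff_mul_of_mem_degOne (connCoord_mem b W _), smul_sub,
          sum_sub_distrib, hswap]
        module
    _ = ∑ p, ∑ q, structConst b i p q • (W.curvCoord b p * W.connCoord b q) := by
        simp only [hDa, sub_mul, smul_sub, sum_sub_distrib, smul_mul_assoc, smul_comm _ (2⁻¹ : ℂ),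
          ← smul_sum, sum_structConst_smul_mul_connCoord_eq_zero, smul_zero, sub_zero]

lemma totalDiff_prod_curvCoord {n : ℕ} (iv : Fin n → ι) :
    W.totalDiff (List.ofFn (W.curvCoord b ∘ iv)).prod
      = ∑ j, ∑ p, ∑ q, structConst b (iv j) p q •
          ((List.ofFn (W.curvCoord b ∘ Function.update iv j p)).prod * W.connCoord b q) := by
  rw [map_prod_ofFn_of_leibniz W.totalDiff W.totalDiff_one (W.curvCoord b ∘ iv)
    fun j => W.totalDiff_mul_of_mem_degTwo (W.curvCoord_mem b (iv j))]
  have hcomm : ∀ q k, Commute (W.connCoord b q) ((W.curvCoord b ∘ iv) k) := fun q k =>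
    (W.commute_of_mem_degTwo_of_mem_degOne (W.curvCoord_mem b _) (W.connCoord_mem b q)).symm
  simp only [Function.comp_apply, totalDiff_curvCoord, prod_ofFn_update_sum,
    prod_ofFn_update_smul, prod_ofFn_update_mul_of_commute (hcomm _), Function.comp_update]

lemma totalDiff_multiEval {n : ℕ} (P : MultilinearMap ℂ (fun _ : Fin n => g) ℂ) :
    W.totalDiff (multiEval b P fun _ => W.F + W.ψ + W.φ)
      = ∑ j, ∑ w : Fin n → ι, ∑ q, P (Function.update (b ∘ w) j ⁅b (w j), b q⁆) •
          ((List.ofFn (W.curvCoord b ∘ w)).prod * W.connCoord b q) := by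
  change W.totalDiff (∑ iv, P (b ∘ iv) • (List.ofFn (W.curvCoord b ∘ iv)).prod) = _
  simp only [map_sum, map_smul, totalDiff_prod_curvCoord, smul_sum, smul_smul]
  rw [sum_comm]
  refine sum_congr rfl fun j _ => ?_
  rw [sum_sum_update_swap j]
  refine sum_congr rfl fun w _ => ?_
  rw [sum_comm]
  refine sum_congr rfl fun q _ => ?_
  simp only [Function.update_idem, Function.update_eq_self, Function.update_self, ← sum_smul,
    Function.comp_update, structConst, P.sum_map_update_basis_mul_coord]

theorem totalDiff_multiEval_eq_zero {n : ℕ} {P : MultilinearMap ℂ (fun _ : Fin n => g) ℂ}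
    (hP : IsInvForm P) : W.totalDiff (multiEval b P fun _ => W.F + W.ψ + W.φ) = 0 := by
  rw [totalDiff_multiEval, sum_comm]
  refine sum_eq_zero fun w _ => ?_
  rw [sum_comm]
  refine sum_eq_zero fun q _ => ?_
  rw [← sum_smul]
  exact smul_eq_zero_of_left (hP (b q) (b ∘ w)) _

end BigradedWeil

theorem stmt_16_general (g : Type) [LieRing g] [LieAlgebra ℂ g]
    {ι : Type} [Fintype ι] (b : Module.Basis ι ℂ g)
    (𝔄 : Type) [Ring 𝔄] [Algebra ℂ 𝔄] (W : BigradedWeil g 𝔄)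
    (n : ℕ) (P : MultilinearMap ℂ (fun _ : Fin n => g) ℂ)
    (hinv : IsInvForm P)
    (Q : ℕ → 𝔄)
    (hmem : ∀ j, Q j ∈ baseB b W ∧ Q j ∈ W.gr (2 * n - j) j)
    (hzero : ∀ j, 2 * n < j → Q j = 0)
    (hsum : ∑ j ∈ Finset.range (2 * n + 1), Q j
        = multiEval b P fun _ => W.F + W.ψ + W.φ) :
    ∀ j ≤ 2 * n, W.δ (Q j) + W.d (Q (j + 1)) = 0 :=
  descent_equations W.d W.δ W.graded.2.2.2.submodule_iSupIndep W.d_gr W.δ_gr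
    (fun j => (hmem j).2) hzero (by rw [hsum]; exact W.totalDiff_multiEval_eq_zero b hinv)

/-- the bihomogeneous components `Q^{k,ℓ}` of `P(F+ψ+φ)` (with
`k+ℓ = 2n`) satisfy the descent equations `δQ^{k,ℓ} + dQ^{k−1,ℓ+1} = 0`. -/
theorem stmt_16 (g : Type) [LieRing g] [LieAlgebra ℂ g] [FiniteDimensional ℂ g]
    {ι : Type} [Fintype ι] (b : Module.Basis ι ℂ g)
    (𝔄 : Type) [Ring 𝔄] [Algebra ℂ 𝔄] (W : BigradedWeil g 𝔄)
    (n : ℕ) (P : MultilinearMap ℂ (fun _ : Fin n => g) ℂ)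
    (hsym : IsSymForm P) (hinv : IsInvForm P)
    (Q : ℕ → 𝔄)
    (hmem : ∀ j, Q j ∈ baseB b W ∧ Q j ∈ W.gr (2 * n - j) j)
    (hzero : ∀ j, 2 * n < j → Q j = 0)
    (hsum : ∑ j ∈ Finset.range (2 * n + 1), Q j
        = multiEval b P fun _ => W.F + W.ψ + W.φ) :
    ∀ j ≤ 2 * n, W.δ (Q j) + W.d (Q (j + 1)) = 0 :=
  stmt_16_general g b 𝔄 W n P hinv Q hmem hzero hsum
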